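/- Eigenvalue stability under trace norm perturbation: for bounded Hermitian matrices A and B of the same size, ‖λ(A) - λ(B)‖₁ ≤ ‖A - B‖₁, where λ(A) denotes the vector of eigenvalues of A sorted in decreasing order and the left-hand side is the ℓ¹ distance between the sorted eigenvalue vectors. -/

import Mathlib

open scoped Matrix ComplexOrder

noncomputable section

namespace QI

variable {n : ℕ}

def traceNorm {m : Type*} [Fintype m] [DecidableEq m] (A : Matrix m m ℂ) : ℝ :=
  ∑ i, Real.sqrt ((Matrix.isHermitian_mul_conjTranspose_self Aᴴ).eigenvalues i)

/-- The eigenvalues of a Hermitian matrix sorted in decreasing order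
(with multiplicity). -/
def sortedEigsDesc {A : Matrix (Fin n) (Fin n) ℂ} (h : A.IsHermitian) : Fin n → ℝ :=
  fun i => h.eigenvalues (Tuple.sort h.eigenvalues i.rev)

end QI

/-!
Write `A - B = P - N` with `P, N ≥ 0` the positive and negative parts of `A - B`, so that
`‖A - B‖₁ = tr P + tr N`, and put `M = A + N = B + P`. Since `A ≤ M` and `B ≤ M`, Weyl's
monotonicity principle gives `λₖ(A) ≤ λₖ(M)` and `λₖ(B) ≤ λₖ(M)`, hence
`|λₖ(A) - λₖ(B)| ≤ (λₖ(M) - λₖ(A)) + (λₖ(M) - λₖ(B))`. Summing over `k`, the right-hand side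
becomes `2 tr M - tr A - tr B = tr N + tr P`.

Weyl's principle itself is the Courant–Fischer dimension count: for `T ≤ S`, the span of the
first `k + 1` eigenvectors of `T` meets the span of the last `n - k` eigenvectors of `S` in some
`x ≠ 0`, and `λₖ(T) ‖x‖² ≤ ⟪T x, x⟫ ≤ ⟪S x, x⟫ ≤ λₖ(S) ‖x‖²`.
-/

open Module Submodule RCLike Matrix Polynomial

theorem Submodule.exists_mem_inf_ne_zero_of_finrank_lt {K V : Type*} [DivisionRing K]
    [AddCommGroup V] [Module K V] [FiniteDimensional K V] {s t : Submodule K V}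
    (h : finrank K V < finrank K s + finrank K t) : ∃ x ∈ s, x ∈ t ∧ x ≠ 0 := by
  by_contra! hst
  exact h.not_ge (finrank_add_finrank_le_of_disjoint (disjoint_def.mpr hst))

namespace OrthonormalBasis

variable {ι 𝕜 E : Type*} [Fintype ι] [RCLike 𝕜] [NormedAddCommGroup E] [InnerProductSpace 𝕜 E]

theorem finrank_span_image_finset (b : OrthonormalBasis ι 𝕜 E) (s : Finset ι) :
    finrank 𝕜 (span 𝕜 (b '' s)) = s.card := by
  rw [Set.image_eq_range, finrank_span_eq_card (b := fun i : (s : Set ι) => b i)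
    (b.orthonormal.linearIndependent.comp _ Subtype.val_injective)]
  simp

theorem repr_eq_zero_of_mem_span_image (b : OrthonormalBasis ι 𝕜 E) {s : Set ι} {x : E}
    (hx : x ∈ span 𝕜 (b '' s)) {i : ι} (hi : i ∉ s) : b.repr x i = 0 := by
  have : span 𝕜 (b '' s) ≤ LinearMap.ker (innerₛₗ 𝕜 (b i)) := by
    rw [span_le]
    rintro _ ⟨j, hj, rfl⟩
    exact b.orthonormal.inner_eq_zero (ne_of_mem_of_not_mem hj hi).symm
  simpa [b.repr_apply_apply] using this hx

end OrthonormalBasis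

namespace LinearMap.IsSymmetric

variable {𝕜 E : Type*} [RCLike 𝕜] [NormedAddCommGroup E] [InnerProductSpace 𝕜 E]
  [FiniteDimensional 𝕜 E] {T S : E →ₗ[𝕜] E} {n : ℕ}

theorem re_inner_apply_self_eq_sum (hT : T.IsSymmetric) (hn : finrank 𝕜 E = n) (x : E) :
    re (inner 𝕜 (T x) x) = ∑ i, hT.eigenvalues hn i * ‖(hT.eigenvectorBasis hn).repr x i‖ ^ 2 := by
  rw [← (hT.eigenvectorBasis hn).repr.inner_map_map, PiLp.inner_apply, map_sum]
  refine Finset.sum_congr rfl fun i _ => ?_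
  rw [eigenvectorBasis_apply_self_apply, ← smul_eq_mul, inner_smul_left, conj_ofReal,
    inner_self_eq_norm_sq_to_K, ← ofReal_pow, ← ofReal_mul, ofReal_re]

theorem eigenvalues_mul_norm_sq_le_re_inner (hT : T.IsSymmetric) (hn : finrank 𝕜 E = n)
    {k : Fin n} {x : E} (hx : ∀ i, k < i → (hT.eigenvectorBasis hn).repr x i = 0) :
    hT.eigenvalues hn k * ‖x‖ ^ 2 ≤ re (inner 𝕜 (T x) x) := by
  rw [re_inner_apply_self_eq_sum, ← (hT.eigenvectorBasis hn).repr.norm_map,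
    EuclideanSpace.norm_sq_eq, Finset.mul_sum]
  refine Finset.sum_le_sum fun i _ => ?_
  rcases le_or_gt i k with hik | hki
  · exact mul_le_mul_of_nonneg_right (hT.eigenvalues_antitone hn hik) (by positivity)
  · simp [hx i hki]

theorem re_inner_le_eigenvalues_mul_norm_sq (hT : T.IsSymmetric) (hn : finrank 𝕜 E = n)
    {k : Fin n} {x : E} (hx : ∀ i, i < k → (hT.eigenvectorBasis hn).repr x i = 0) :
    re (inner 𝕜 (T x) x) ≤ hT.eigenvalues hn k * ‖x‖ ^ 2 := by
  rw [re_inner_apply_self_eq_sum, ← (hT.eigenvectorBasis hn).repr.norm_map,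
    EuclideanSpace.norm_sq_eq, Finset.mul_sum]
  refine Finset.sum_le_sum fun i _ => ?_
  rcases le_or_gt k i with hki | hik
  · exact mul_le_mul_of_nonneg_right (hT.eigenvalues_antitone hn hki) (by positivity)
  · simp [hx i hik]

theorem eigenvalues_le_of_le (hT : T.IsSymmetric) (hS : S.IsSymmetric) (hn : finrank 𝕜 E = n)
    (hTS : T ≤ S) (k : Fin n) : hT.eigenvalues hn k ≤ hS.eigenvalues hn k := by
  set b := hT.eigenvectorBasis hn
  set c := hS.eigenvectorBasis hn
  obtain ⟨x, hxb, hxc, hx0⟩ := exists_mem_inf_ne_zero_of_finrank_lt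
    (s := span 𝕜 (b '' (Finset.Iic k : Set (Fin n))))
    (t := span 𝕜 (c '' (Finset.Ici k : Set (Fin n)))) (by
      rw [b.finrank_span_image_finset, c.finrank_span_image_finset, Fin.card_Iic, Fin.card_Ici, hn]
      omega)
  have hT_low := hT.eigenvalues_mul_norm_sq_le_re_inner hn fun i hi =>
    b.repr_eq_zero_of_mem_span_image hxb (by simpa using hi)
  have hS_up := hS.re_inner_le_eigenvalues_mul_norm_sq hn fun i hi =>
    c.repr_eq_zero_of_mem_span_image hxc (by simpa using hi)
  have hTS_x : re (inner 𝕜 (T x) x) ≤ re (inner 𝕜 (S x) x) := by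
    simpa [inner_sub_left] using ((LinearMap.le_def T S).mp hTS).re_inner_nonneg_left x
  exact le_of_mul_le_mul_right (hT_low.trans (hTS_x.trans hS_up)) (by positivity)

end LinearMap.IsSymmetric

theorem Antitone.eq_of_map_univ_val_eq {α : Type*} [PartialOrder α] {n : ℕ} {f g : Fin n → α}
    (hf : Antitone f) (hg : Antitone g)
    (h : Finset.univ.val.map f = Finset.univ.val.map g) : f = g := by
  rw [Fin.univ_val_map, Fin.univ_val_map, Multiset.coe_eq_coe] at h
  exact List.ofFn_injective (h.eq_of_sortedGE hf.sortedGE_ofFn hg.sortedGE_ofFn)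

namespace Matrix.IsHermitian

variable {𝕜 m : Type*} [RCLike 𝕜] [Fintype m] [DecidableEq m] {M : Matrix m m 𝕜}

theorem sum_comp_eigenvalues_of_charpoly_eq {β : Type*} [AddCommMonoid β] (hM : M.IsHermitian)
    {g : m → ℝ} (h : M.charpoly = ∏ i, (X - C (g i : 𝕜))) (φ : ℝ → β) :
    ∑ i, φ (hM.eigenvalues i) = ∑ i, φ (g i) := by
  have hmap : Finset.univ.val.map hM.eigenvalues = Finset.univ.val.map g := by
    refine Multiset.map_injective (RCLike.ofReal_injective (K := 𝕜)) ?_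
    rw [Multiset.map_map, Multiset.map_map, ← hM.roots_charpoly_eq_eigenvalues, h,
      roots_prod _ _ (Finset.prod_ne_zero_iff.mpr fun i _ => X_sub_C_ne_zero _)]
    simp
  simpa [Multiset.map_map, Function.comp_def, Finset.sum_map_val]
    using congrArg (fun s => (s.map φ).sum) hmap

theorem trace_cfc (hM : M.IsHermitian) (f : ℝ → ℝ) :
    trace (cfc f M) = ∑ i, (f (hM.eigenvalues i) : 𝕜) := by
  have hf : (cfc f M).IsHermitian := isHermitian_iff_isSelfAdjoint.mpr (cfc_predicate f M)
  rw [hf.trace_eq_sum_eigenvalues]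
  exact hf.sum_comp_eigenvalues_of_charpoly_eq (hM.charpoly_cfc_eq f) _

open scoped MatrixOrder in
theorem exists_posSemidef_sub_eq (hM : M.IsHermitian) :
    ∃ P N : Matrix m m 𝕜, P.PosSemidef ∧ N.PosSemidef ∧ P - N = M ∧
      re (trace P) + re (trace N) = ∑ i, |hM.eigenvalues i| := by
  refine ⟨cfc (·⁺ : ℝ → ℝ) M, cfc (·⁻ : ℝ → ℝ) M,
    nonneg_iff_posSemidef.mp (cfc_nonneg fun x _ => posPart_nonneg x),
    nonneg_iff_posSemidef.mp (cfc_nonneg fun x _ => negPart_nonneg x), ?_, ?_⟩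
  · rw [← cfc_sub (·⁺) (·⁻) M]
    simp only [posPart_sub_negPart]
    exact cfc_id' ℝ M
  · simp only [hM.trace_cfc, map_sum, ofReal_re, ← Finset.sum_add_distrib, posPart_add_negPart]

end Matrix.IsHermitian

namespace QI

variable {n : ℕ} {A B M : Matrix (Fin n) (Fin n) ℂ}

theorem sortedEigsDesc_eq_comp (hA : A.IsHermitian) :
    sortedEigsDesc hA = hA.eigenvalues ∘ Fin.revPerm.trans (Tuple.sort hA.eigenvalues) :=
  rfl

theorem sortedEigsDesc_antitone (hA : A.IsHermitian) : Antitone (sortedEigsDesc hA) :=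
  fun _ _ hij => Tuple.monotone_sort hA.eigenvalues (Fin.rev_le_rev.mpr hij)

theorem sortedEigsDesc_eq_eigenvalues (hA : A.IsHermitian) :
    sortedEigsDesc hA =
      (isSymmetric_toEuclideanLin_iff.mpr hA).eigenvalues finrank_euclideanSpace_fin := by
  refine (sortedEigsDesc_antitone hA).eq_of_map_univ_val_eq
    (LinearMap.IsSymmetric.eigenvalues_antitone _ _) ?_
  refine Multiset.map_injective (RCLike.ofReal_injective (K := ℂ)) ?_
  rw [Multiset.map_map, Multiset.map_map, ← LinearMap.IsSymmetric.roots_charpoly_eq_eigenvalues,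
    toEuclideanLin, toLpLin_eq_toLin, charpoly_toLin, hA.roots_charpoly_eq_eigenvalues,
    sortedEigsDesc_eq_comp, ← Function.comp_assoc, ← Multiset.map_map,
    Multiset.map_univ_val_equiv]

theorem sortedEigsDesc_le_of_le (hA : A.IsHermitian) (hB : B.IsHermitian) (hAB : (B - A).PosSemidef)
    (k : Fin n) : sortedEigsDesc hA k ≤ sortedEigsDesc hB k := by
  rw [sortedEigsDesc_eq_eigenvalues, sortedEigsDesc_eq_eigenvalues]
  refine LinearMap.IsSymmetric.eigenvalues_le_of_le _ _ _ ?_ k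
  rwa [LinearMap.le_def, ← map_sub, isPositive_toEuclideanLin_iff]

theorem sum_sortedEigsDesc (hA : A.IsHermitian) : ∑ i, sortedEigsDesc hA i = (trace A).re :=
  calc ∑ i, sortedEigsDesc hA i = ∑ i, hA.eigenvalues i :=
        Equiv.sum_comp (Fin.revPerm.trans (Tuple.sort hA.eigenvalues)) _
    _ = (trace A).re := by simp [hA.trace_eq_sum_eigenvalues]

theorem traceNorm_eq_sum_abs_eigenvalues {m : Type*} [Fintype m] [DecidableEq m]
    {M : Matrix m m ℂ} (hM : M.IsHermitian) : traceNorm M = ∑ i, |hM.eigenvalues i| := by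
  have hMM : Mᴴ * Mᴴᴴ = cfc (· ^ 2 : ℝ → ℝ) M := by
    rw [conjTranspose_conjTranspose, hM.eq, cfc_pow_id M 2 hM.isSelfAdjoint, sq]
  rw [traceNorm, (isHermitian_mul_conjTranspose_self Mᴴ).sum_comp_eigenvalues_of_charpoly_eq
    (by rw [hMM]; exact hM.charpoly_cfc_eq _) Real.sqrt]
  simp [Real.sqrt_sq_eq_abs]

theorem sum_abs_sub_sortedEigsDesc_le (hA : A.IsHermitian) (hB : B.IsHermitian)
    (hM : M.IsHermitian) (hAM : (M - A).PosSemidef) (hBM : (M - B).PosSemidef) :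
    ∑ i, |sortedEigsDesc hA i - sortedEigsDesc hB i| ≤
      (trace (M - A)).re + (trace (M - B)).re := by
  have hpointwise : ∀ i, |sortedEigsDesc hA i - sortedEigsDesc hB i| ≤
      (sortedEigsDesc hM i - sortedEigsDesc hA i) +
        (sortedEigsDesc hM i - sortedEigsDesc hB i) := by
    intro i
    have hAi := sortedEigsDesc_le_of_le hA hM hAM i
    have hBi := sortedEigsDesc_le_of_le hB hM hBM i
    rw [abs_sub_le_iff]
    constructor <;> linarith
  refine (Finset.sum_le_sum fun i _ => hpointwise i).trans_eq ?_
  simp only [Finset.sum_add_distrib, Finset.sum_sub_distrib, sum_sortedEigsDesc, trace_sub,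
    Complex.sub_re]

end QI

open QI

/-- **Eigenvalue stability under trace-norm perturbation**: for Hermitian
matrices `A`, `B` of the same size, `‖λ(A) - λ(B)‖₁ ≤ ‖A - B‖₁`, where `λ(·)`
is the decreasingly sorted vector of eigenvalues and the left-hand side is the
`ℓ¹` distance between the sorted eigenvalue vectors. -/
theorem eigenvalue_stability {n : ℕ} (A B : Matrix (Fin n) (Fin n) ℂ)
    (hA : A.IsHermitian) (hB : B.IsHermitian) :
    ∑ i, |sortedEigsDesc hA i - sortedEigsDesc hB i| ≤ traceNorm (A - B) := by
  obtain ⟨P, N, hP, hN, hPN, htrace⟩ := (hA.sub hB).exists_posSemidef_sub_eq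
  have hAN : A + N - B = P := by rw [add_sub_right_comm, ← hPN, sub_add_cancel]
  calc ∑ i, |sortedEigsDesc hA i - sortedEigsDesc hB i|
      ≤ (trace (A + N - A)).re + (trace (A + N - B)).re :=
        sum_abs_sub_sortedEigsDesc_le hA hB (hA.add hN.isHermitian)
          (by rwa [add_sub_cancel_left]) (by rwa [hAN])
    _ = traceNorm (A - B) := by
        rw [add_sub_cancel_left, hAN, add_comm, traceNorm_eq_sum_abs_eigenvalues (hA.sub hB)]
        exact htrace
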